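/- Let 0 < p ≤ 1, let X be a p-Banach space over 𝔽 = ℝ or ℂ, and let 𝒳 be a basis of X. Suppose there is C > 0 such that ‖f − P_A(f)‖ ≤ C·‖f − (min_{n∈A}|x_n^*(f)|)·𝟙_B‖ for all f ∈ X, all greedy sets A of f, and all B ⊂ ℕ with |B| = |A| and either A < B or B < A. Then for every finite nonempty set A ⊂ ℕ, every sign ε on A, and every f ∈ X such that |{n ∈ supp(f) : |x_n^*(f)| ≥ 1}| ≥ |A|, one has ‖𝟙_{ε,A}‖ ≤ 2^{1/p − 1}·B_p·C²·‖f‖. In particular, 𝒳 is superdemocratic with superdemocracy constant at most 2^{1/p − 1}·B_p·C². -/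

import Mathlib

open scoped BigOperators

noncomputable section

/-- A basis of a `p`-Banach space over `𝕜` (`𝕜 = ℝ` or `ℂ`), bundled with the `p`-norm
`N`, the basis vectors `e`, and the biorthogonal functionals `coord`. -/
structure PBasis (𝕜 : Type*) [RCLike 𝕜] (X : Type*) [AddCommGroup X] [Module 𝕜 X]
    (p : ℝ) : Type _ where
  /-- the `p`-norm of the space -/
  N : X → ℝ
  N_nonneg : ∀ f : X, 0 ≤ N f
  N_eq_zero_iff : ∀ f : X, N f = 0 ↔ f = 0
  N_smul : ∀ (t : 𝕜) (f : X), N (t • f) = ‖t‖ * N f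
  N_padd : ∀ f g : X, N (f + g) ^ p ≤ N f ^ p + N g ^ p
  /-- completeness with respect to the `p`-norm -/
  complete : ∀ u : ℕ → X,
      (∀ ε : ℝ, 0 < ε → ∃ n₀ : ℕ, ∀ m n : ℕ, n₀ ≤ m → n₀ ≤ n → N (u m - u n) < ε) →
      ∃ f : X, ∀ ε : ℝ, 0 < ε → ∃ n₀ : ℕ, ∀ n : ℕ, n₀ ≤ n → N (u n - f) < ε
  /-- the basis vectors -/
  e : ℕ → X
  /-- the biorthogonal functionals -/
  coord : ℕ → X →ₗ[𝕜] 𝕜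
  biorth : ∀ n m : ℕ, coord n (e m) = if n = m then (1 : 𝕜) else 0
  /-- the closed linear span of the basis vectors is the whole space -/
  dense_span : ∀ f : X, ∀ ε : ℝ, 0 < ε →
      ∃ g ∈ Submodule.span 𝕜 (Set.range e), N (f - g) < ε
  e_bdd : ∃ c : ℝ, ∀ n : ℕ, N (e n) ≤ c
  coord_bdd : ∃ c : ℝ, ∀ (n : ℕ) (f : X), ‖coord n f‖ ≤ c * N f

namespace PBasis

variable {𝕜 : Type*} [RCLike 𝕜] {X : Type*} [AddCommGroup X] [Module 𝕜 X] {p : ℝ}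

/-- The projection `P_A f = ∑_{n ∈ A} x_n^*(f) x_n`. -/
def proj (bs : PBasis 𝕜 X p) (A : Finset ℕ) (f : X) : X :=
  ∑ n ∈ A, bs.coord n f • bs.e n

/-- The support of `f`. -/
def supp (bs : PBasis 𝕜 X p) (f : X) : Set ℕ := {n | bs.coord n f ≠ 0}

/-- `A` is a greedy set of `f`: `min_{n ∈ A} |x_n^*(f)| ≥ max_{m ∉ A} |x_m^*(f)|`. -/
def IsGreedySet (bs : PBasis 𝕜 X p) (f : X) (A : Finset ℕ) : Prop :=
  ∀ n ∈ A, ∀ m : ℕ, m ∉ A → ‖bs.coord m f‖ ≤ ‖bs.coord n f‖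

/-- `𝟙_{ε,A} = ∑_{j ∈ A} ε_j x_j`. -/
def indSign (bs : PBasis 𝕜 X p) (ε : ℕ → 𝕜) (A : Finset ℕ) : X :=
  ∑ j ∈ A, ε j • bs.e j

/-- `𝟙_A = ∑_{j ∈ A} x_j`. -/
def ind (bs : PBasis 𝕜 X p) (A : Finset ℕ) : X := ∑ j ∈ A, bs.e j

/-- `ε` is a sign on `A`. -/
def IsSign (ε : ℕ → 𝕜) (A : Finset ℕ) : Prop := ∀ j ∈ A, ‖ε j‖ = 1

/-- `min_{n ∈ A} |x_n^*(f)|`. -/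
def minCoef (bs : PBasis 𝕜 X p) (f : X) (A : Finset ℕ) : ℝ :=
  sInf ((fun n => ‖bs.coord n f‖) '' (A : Set ℕ))

/-- `‖f − P_A(f)‖ ≤ C·σ_m(f)` for every greedy set `A` of cardinality `m`. -/
def IsGreedyWith (bs : PBasis 𝕜 X p) (C : ℝ) : Prop :=
  ∀ (f : X) (A B : Finset ℕ) (a : ℕ → 𝕜), bs.IsGreedySet f A → B.card ≤ A.card →
    bs.N (f - bs.proj A f) ≤ C * bs.N (f - ∑ j ∈ B, a j • bs.e j)

/-- `‖f − P_A(f)‖ ≤ C·ρ_m(f)` for every greedy set `A` of cardinality `m`, where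
`ρ_m(f) = inf {‖f − α 𝟙_{ε,B}‖ : |B| = m, ε sign}` and `α = min_{n ∈ A} |x_n^*(f)|`. -/
def IsRGPCCWith (bs : PBasis 𝕜 X p) (C : ℝ) : Prop :=
  ∀ (f : X) (A B : Finset ℕ) (ε : ℕ → 𝕜), bs.IsGreedySet f A → B.card = A.card →
    IsSign ε B →
    bs.N (f - bs.proj A f) ≤ C * bs.N (f - ((bs.minCoef f A : ℝ) : 𝕜) • bs.indSign ε B)

/-- `‖f − P_A(f)‖ ≤ C·ϱ_m(f)` for every greedy set `A` of cardinality `m`, where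
`ϱ_m(f) = inf {‖f − α 𝟙_B‖ : |B| = m}` and `α = min_{n ∈ A} |x_n^*(f)|`. -/
def IsURGPCCWith (bs : PBasis 𝕜 X p) (C : ℝ) : Prop :=
  ∀ (f : X) (A B : Finset ℕ), bs.IsGreedySet f A → B.card = A.card →
    bs.N (f - bs.proj A f) ≤ C * bs.N (f - ((bs.minCoef f A : ℝ) : 𝕜) • bs.ind B)

/-- `K`-unconditionality. -/
def IsUncondWith (bs : PBasis 𝕜 X p) (K : ℝ) : Prop :=
  ∀ (A : Finset ℕ) (f : X), bs.N (bs.proj A f) ≤ K * bs.N f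

/-- `C`-quasi-greediness. -/
def IsQuasiGreedyWith (bs : PBasis 𝕜 X p) (C : ℝ) : Prop :=
  ∀ (f : X) (A : Finset ℕ), bs.IsGreedySet f A → bs.N (f - bs.proj A f) ≤ C * bs.N f

/-- `C`-almost-greediness. -/
def IsAlmostGreedyWith (bs : PBasis 𝕜 X p) (C : ℝ) : Prop :=
  ∀ (f : X) (A B : Finset ℕ), bs.IsGreedySet f A → B.card ≤ A.card →
    bs.N (f - bs.proj A f) ≤ C * bs.N (f - bs.proj B f)

/-- `D`-democracy. -/
def IsDemocraticWith (bs : PBasis 𝕜 X p) (D : ℝ) : Prop :=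
  ∀ A B : Finset ℕ, A.card ≤ B.card → bs.N (bs.ind A) ≤ D * bs.N (bs.ind B)

/-- `D`-superdemocracy. -/
def IsSuperdemocraticWith (bs : PBasis 𝕜 X p) (D : ℝ) : Prop :=
  ∀ (A B : Finset ℕ) (ε η : ℕ → 𝕜), A.card ≤ B.card → IsSign ε A → IsSign η B →
    bs.N (bs.indSign ε A) ≤ D * bs.N (bs.indSign η B)

/-- `A < B`, i.e. every element of `A` is smaller than every element of `B`. -/
def FinsetBefore (A B : Finset ℕ) : Prop := ∀ a ∈ A, ∀ b ∈ B, a < b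

open scoped Classical in
/-- `sgn z = z/|z|` (with the convention `sgn 0 = 1`). -/
def sgn (z : 𝕜) : 𝕜 := if z = 0 then 1 else z / ((‖z‖ : ℝ) : 𝕜)

end PBasis

/-!
Split off a block `U` far to the right, where the coefficients of `f` are negligible, and let
`D` be a greedy set of `f` of the same size, all of whose coefficients are at least `1`.
Applying the hypothesis to `α 𝟙_U ± f` with `α = min_{n ∈ D} |x_n^*(f)| ≥ 1` bounds both
`‖α 𝟙_U ± (f - P_D f)‖` by `C ‖f‖`, hence `‖𝟙_U‖ ≤ 2^{1/p - 1} C ‖f‖`; one more application,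
to `𝟙_{A'} + 𝟙_U`, gives `‖𝟙_{A'}‖ ≤ C ‖𝟙_U‖` for every `A' ⊆ A` lying to the left of `U`.
Finally, bounds on all `‖𝟙_{A'}‖`, `A' ⊆ A`, pass to every `∑_{j ∈ A} a_j x_j` with
`|a_j| ≤ 1`: for `a_j ∈ [0, 1]` through the binary expansion of the coefficients (this is where
`A_p` comes from), and then through the decompositions into positive and negative, real and
imaginary parts.
-/

namespace Finset

lemma exists_subset_card_eq_forall_le {α β : Type*} [LinearOrder β] (v : α → β)
    (S : Finset α) {k : ℕ} (hk : k ≤ S.card) :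
    ∃ D ⊆ S, D.card = k ∧ ∀ n ∈ D, ∀ m ∈ S, m ∉ D → v m ≤ v n := by
  classical
  induction k with
  | zero => exact ⟨∅, empty_subset _, rfl, by simp⟩
  | succ k ih =>
    obtain ⟨D, hDS, hcard, htop⟩ := ih (Nat.le_of_succ_le hk)
    have hne : (S \ D).Nonempty := by
      rw [← card_pos, card_sdiff_of_subset hDS]; omega
    obtain ⟨x, hx, hmax⟩ := exists_max_image (S \ D) v hne
    obtain ⟨hxS, hxD⟩ := mem_sdiff.mp hx
    refine ⟨insert x D, insert_subset hxS hDS, by rw [card_insert_of_notMem hxD, hcard], ?_⟩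
    intro n hn m hm hmn
    rw [mem_insert, not_or] at hmn
    rcases mem_insert.mp hn with rfl | hn
    · exact hmax m (mem_sdiff.mpr ⟨hm, hmn.2⟩)
    · exact htop n hn m hm hmn.2

end Finset

namespace PBasis

open Finset Filter Topology

variable {𝕜 : Type*} [RCLike 𝕜] {X : Type*} [AddCommGroup X] [Module 𝕜 X] {p : ℝ}
variable (bs : PBasis 𝕜 X p)

section Quasinorm

lemma N_zero : bs.N 0 = 0 := (bs.N_eq_zero_iff 0).mpr rfl

lemma N_neg (f : X) : bs.N (-f) = bs.N f := by
  simpa using bs.N_smul (-1) f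

lemma N_ofReal_smul (r : ℝ) (f : X) : bs.N ((r : 𝕜) • f) = |r| * bs.N f := by
  rw [bs.N_smul, RCLike.norm_ofReal]

lemma N_sum_rpow_le (hp : 0 < p) {ι : Type*} (s : Finset ι) (g : ι → X) :
    bs.N (∑ i ∈ s, g i) ^ p ≤ ∑ i ∈ s, bs.N (g i) ^ p := by
  classical
  induction s using Finset.cons_induction with
  | empty => simp [bs.N_zero, Real.zero_rpow hp.ne']
  | cons a s ha ih =>
    rw [sum_cons, sum_cons]
    exact (bs.N_padd _ _).trans (by linarith)

lemma N_add_le_two_rpow_mul (hp : 0 < p) {f g : X} {a : ℝ} (hf : bs.N f ≤ a)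
    (hg : bs.N g ≤ a) : bs.N (f + g) ≤ 2 ^ (1 / p) * a := by
  have ha : 0 ≤ a := (bs.N_nonneg f).trans hf
  have hrhs : (2 ^ (1 / p) * a) ^ p = 2 * a ^ p := by
    rw [Real.mul_rpow (by positivity) ha, one_div, Real.rpow_inv_rpow zero_le_two hp.ne']
  rw [← Real.rpow_le_rpow_iff (bs.N_nonneg _) (by positivity) hp, hrhs]
  calc bs.N (f + g) ^ p ≤ bs.N f ^ p + bs.N g ^ p := bs.N_padd f g
    _ ≤ a ^ p + a ^ p := by gcongr <;> exact bs.N_nonneg _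
    _ = 2 * a ^ p := by ring

lemma N_le_two_rpow_sub_one_mul (hp : 0 < p) {f g : X} {a : ℝ} (hadd : bs.N (f + g) ≤ a)
    (hsub : bs.N (f - g) ≤ a) : bs.N f ≤ 2 ^ (1 / p - 1) * a := by
  have h := bs.N_add_le_two_rpow_mul hp hadd hsub
  rw [show f + g + (f - g) = (2 : 𝕜) • f by rw [two_smul]; abel, bs.N_smul,
    RCLike.norm_two] at h
  rw [Real.rpow_sub zero_lt_two, Real.rpow_one]
  linarith

lemma N_rpow_le_add (f g : X) : bs.N f ^ p ≤ bs.N g ^ p + bs.N (f - g) ^ p := by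
  simpa using bs.N_padd g (f - g)

lemma le_mul_N_of_forall_approx (hp : 0 < p) {K x : ℝ} (hK : 0 ≤ K) (f : X)
    (h : ∀ δ > 0, ∃ g, bs.N (f - g) ^ p < δ ∧ x ≤ K * bs.N g) : x ≤ K * bs.N f := by
  rcases lt_or_ge x 0 with hx | hx
  · exact hx.le.trans (mul_nonneg hK (bs.N_nonneg f))
  have hKf : 0 ≤ K * bs.N f := mul_nonneg hK (bs.N_nonneg f)
  rw [← Real.rpow_le_rpow_iff hx hKf hp, Real.mul_rpow hK (bs.N_nonneg f)]
  refine le_of_forall_pos_le_add fun ε hε => ?_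
  have hKp : 0 ≤ K ^ p := Real.rpow_nonneg hK p
  obtain ⟨g, hfg, hxg⟩ := h (ε / (K ^ p + 1)) (by positivity)
  have hgf : bs.N g ^ p ≤ bs.N f ^ p + ε / (K ^ p + 1) := by
    have := bs.N_rpow_le_add g f
    rw [← neg_sub, bs.N_neg] at this
    linarith
  calc x ^ p ≤ (K * bs.N g) ^ p := by gcongr
    _ = K ^ p * bs.N g ^ p := Real.mul_rpow hK (bs.N_nonneg g)
    _ ≤ K ^ p * (bs.N f ^ p + ε / (K ^ p + 1)) := by gcongr
    _ ≤ K ^ p * bs.N f ^ p + ε := by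
      rw [mul_add, mul_div_assoc']
      gcongr
      rw [div_le_iff₀ (by positivity)]
      nlinarith

end Quasinorm

section Coordinates

lemma coord_ind (n : ℕ) (B : Finset ℕ) :
    bs.coord n (bs.ind B) = if n ∈ B then 1 else 0 := by
  simp [ind, map_sum, bs.biorth]

lemma coord_indSign (ε : ℕ → 𝕜) (n : ℕ) (B : Finset ℕ) :
    bs.coord n (bs.indSign ε B) = if n ∈ B then ε n else 0 := by
  simp [indSign, map_sum, bs.biorth]

lemma coord_proj (n : ℕ) (U : Finset ℕ) (f : X) :
    bs.coord n (bs.proj U f) = if n ∈ U then bs.coord n f else 0 := by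
  simp [proj, map_sum, bs.biorth]

lemma coord_sub_proj (n : ℕ) (U : Finset ℕ) (f : X) :
    bs.coord n (f - bs.proj U f) = if n ∈ U then 0 else bs.coord n f := by
  rw [map_sub, coord_proj]
  split_ifs <;> simp

lemma tendsto_coord_atTop (f : X) : Tendsto (fun n => bs.coord n f) atTop (𝓝 0) := by
  rw [NormedAddGroup.tendsto_nhds_zero]
  intro ε hε
  obtain ⟨c, hc⟩ := bs.coord_bdd
  have hc' : 0 < max c 1 := zero_lt_one.trans_le (le_max_right _ _)
  obtain ⟨g, hg, hfg⟩ := bs.dense_span f (ε / max c 1) (by positivity)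
  obtain ⟨a, rfl⟩ := Finsupp.mem_span_range_iff_exists_finsupp.mp hg
  have hcoord : ∀ n, bs.coord n (a.sum fun i t => t • bs.e i) = a n := by
    intro n
    simp [Finsupp.sum, map_sum, bs.biorth, eq_comm]
  refine eventually_atTop.mpr ⟨a.support.sup id + 1, fun n hn => ?_⟩
  have hna : a n = 0 := Finsupp.notMem_support_iff.mp fun h => by
    have := le_sup (f := id) h
    simp only [id] at this
    omega
  calc ‖bs.coord n f‖ = ‖bs.coord n (f - a.sum fun i t => t • bs.e i)‖ := by
        rw [map_sub, hcoord, hna, sub_zero]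
    _ ≤ max c 1 * bs.N (f - a.sum fun i t => t • bs.e i) :=
        (hc n _).trans (by gcongr; exacts [bs.N_nonneg _, le_max_left _ _])
    _ < max c 1 * (ε / max c 1) := by gcongr
    _ = ε := by field_simp

lemma finite_setOf_one_le_norm_coord (f : X) : {n | 1 ≤ ‖bs.coord n f‖}.Finite := by
  obtain ⟨n₀, hn₀⟩ := eventually_atTop.mp
    ((NormedAddGroup.tendsto_nhds_zero.mp (bs.tendsto_coord_atTop f)) 1 one_pos)
  refine (Set.finite_lt_nat n₀).subset fun n hn => ?_
  by_contra h
  exact (hn₀ n (not_lt.mp h)).not_ge hn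

lemma tendsto_N_proj_Ico_rpow (hp : 0 < p) (f : X) (k : ℕ) :
    Tendsto (fun n => bs.N (bs.proj (Ico n (n + k)) f) ^ p) atTop (𝓝 0) := by
  obtain ⟨c, hc⟩ := bs.e_bdd
  have hbound : ∀ n, bs.N (bs.proj (Ico n (n + k)) f) ^ p ≤
      ∑ i ∈ range k, (‖bs.coord (n + i) f‖ * c) ^ p := by
    intro n
    rw [proj, sum_Ico_eq_sum_range, Nat.add_sub_cancel_left]
    refine (bs.N_sum_rpow_le hp _ _).trans (sum_le_sum fun i _ => ?_)
    rw [bs.N_smul]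
    exact Real.rpow_le_rpow (mul_nonneg (norm_nonneg _) (bs.N_nonneg _))
      (mul_le_mul_of_nonneg_left (hc _) (norm_nonneg _)) hp.le
  have hlim : Tendsto (fun n => ∑ i ∈ range k, (‖bs.coord (n + i) f‖ * c) ^ p) atTop (𝓝 0) := by
    have := tendsto_finsetSum (range k) fun i _ =>
      ((((bs.tendsto_coord_atTop f).comp (tendsto_add_atTop_nat i)).norm.mul_const c).rpow_const
        (Or.inr hp.le))
    simpa [Real.zero_rpow hp.ne'] using this
  exact tendsto_of_tendsto_of_tendsto_of_le_of_le tendsto_const_nhds hlim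
    (fun n => Real.rpow_nonneg (bs.N_nonneg _) p) hbound

end Coordinates

section Greedy

lemma minCoef_nonneg (f : X) (D : Finset ℕ) : 0 ≤ bs.minCoef f D :=
  Real.sInf_nonneg fun _ ⟨_, _, hx⟩ => hx ▸ norm_nonneg _

lemma minCoef_le {D : Finset ℕ} {n : ℕ} (hn : n ∈ D) (f : X) :
    bs.minCoef f D ≤ ‖bs.coord n f‖ :=
  csInf_le ((D.finite_toSet.image _).bddBelow) ⟨n, hn, rfl⟩

lemma one_le_minCoef {D : Finset ℕ} (hD : D.Nonempty) {f : X}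
    (h : ∀ n ∈ D, 1 ≤ ‖bs.coord n f‖) : 1 ≤ bs.minCoef f D :=
  le_csInf ((coe_nonempty.mpr hD).image _) fun _ ⟨n, hn, hx⟩ => hx ▸ h n hn

lemma minCoef_congr {D : Finset ℕ} {f g : X}
    (h : ∀ n ∈ D, ‖bs.coord n f‖ = ‖bs.coord n g‖) : bs.minCoef f D = bs.minCoef g D := by
  unfold minCoef
  rw [Set.image_congr fun n hn => h n hn]

variable {bs} in
lemma IsGreedySet.sub_proj {f : X} {D U : Finset ℕ} (hD : bs.IsGreedySet f D)
    (hDU : Disjoint D U) : bs.IsGreedySet (f - bs.proj U f) D := by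
  intro n hn m hm
  rw [coord_sub_proj, coord_sub_proj, if_neg (disjoint_left.mp hDU hn)]
  split_ifs
  · simp
  · exact hD n hn m hm

lemma exists_isGreedySet_one_le_norm_coord (f : X) {k : ℕ}
    (hk : (k : ℕ∞) ≤ {n | 1 ≤ ‖bs.coord n f‖}.encard) :
    ∃ D : Finset ℕ, D.card = k ∧ bs.IsGreedySet f D ∧ ∀ n ∈ D, 1 ≤ ‖bs.coord n f‖ := by
  have hS := bs.finite_setOf_one_le_norm_coord f
  rw [hS.encard_eq_coe_toFinset_card, Nat.cast_le] at hk
  obtain ⟨D, hDS, hcard, htop⟩ :=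
    exists_subset_card_eq_forall_le (fun n => ‖bs.coord n f‖) hS.toFinset hk
  have hD1 : ∀ n ∈ D, 1 ≤ ‖bs.coord n f‖ := fun n hn => by simpa using hDS hn
  refine ⟨D, hcard, fun n hn m hm => ?_, hD1⟩
  by_cases hmS : 1 ≤ ‖bs.coord m f‖
  · exact htop n hn m (by simpa using hmS) hm
  · exact (not_le.mp hmS).le.trans (hD1 n hn)

end Greedy

lemma FinsetBefore.disjoint {A B : Finset ℕ} (h : FinsetBefore A B) : Disjoint A B :=
  disjoint_left.mpr fun a ha hb => lt_irrefl a (h a ha a hb)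

section SeparatedCondition

def IsSeparatedURGPCCWith (C : ℝ) : Prop :=
  ∀ (f : X) (A B : Finset ℕ), bs.IsGreedySet f A → B.card = A.card →
    (FinsetBefore A B ∨ FinsetBefore B A) →
    bs.N (f - bs.proj A f) ≤ C * bs.N (f - ((bs.minCoef f A : ℝ) : 𝕜) • bs.ind B)

variable {bs} {C : ℝ}

lemma N_ind_le_of_finsetBefore (hv : bs.IsSeparatedURGPCCWith C) {A B : Finset ℕ}
    (hAB : FinsetBefore A B) (hcard : B.card = A.card) :
    bs.N (bs.ind A) ≤ C * bs.N (bs.ind B) := by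
  rcases B.eq_empty_or_nonempty with rfl | hB
  · rw [card_empty, eq_comm, card_eq_zero] at hcard
    subst hcard
    simp [ind, bs.N_zero]
  set g := bs.ind A + bs.ind B
  have hgB : ∀ n ∈ B, bs.coord n g = 1 := fun n hn => by
    simp [g, coord_ind, hn, disjoint_right.mp hAB.disjoint hn]
  have hgreedy : bs.IsGreedySet g B := fun n hn m hm => by
    rw [hgB n hn, norm_one, map_add, coord_ind, coord_ind, if_neg hm, add_zero]
    split_ifs <;> simp
  have hmin : bs.minCoef g B = 1 := by
    obtain ⟨n, hn⟩ := hB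
    refine le_antisymm ?_ (bs.one_le_minCoef ⟨n, hn⟩ fun m hm => by rw [hgB m hm, norm_one])
    simpa [hgB n hn] using bs.minCoef_le hn g
  have hproj : bs.proj B g = bs.ind B := sum_congr rfl fun n hn => by rw [hgB n hn, one_smul]
  have h := hv g B A hgreedy hcard.symm (Or.inr hAB)
  rwa [hproj, hmin, RCLike.ofReal_one, one_smul, add_sub_cancel_right,
    add_sub_cancel_left] at h

/-- The hypothesis applied to `α 𝟙_U + s f`: since `f` vanishes on `U`, `D` is still a greedy set
with minimal coefficient `α`, and `P_D` kills `𝟙_U`. -/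
lemma N_minCoef_smul_ind_add_smul_le (hv : bs.IsSeparatedURGPCCWith C) {f : X} {D U : Finset ℕ}
    (hDU : FinsetBefore D U) (hcard : U.card = D.card) (hU : ∀ n ∈ U, bs.coord n f = 0)
    (hD : bs.IsGreedySet f D) {s : 𝕜} (hs : ‖s‖ = 1) :
    bs.N (((bs.minCoef f D : ℝ) : 𝕜) • bs.ind U + s • (f - bs.proj D f)) ≤ C * bs.N f := by
  set α := bs.minCoef f D
  set g := (α : 𝕜) • bs.ind U + s • f
  have hcoord : ∀ n, bs.coord n g = if n ∈ U then (α : 𝕜) else s * bs.coord n f := by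
    intro n
    by_cases hn : n ∈ U <;> simp [g, coord_ind, hn, hU]
  have hDU' : ∀ n ∈ D, n ∉ U := fun n hn => disjoint_left.mp hDU.disjoint hn
  have hgD : ∀ n ∈ D, ‖bs.coord n g‖ = ‖bs.coord n f‖ := fun n hn => by
    rw [hcoord, if_neg (hDU' n hn), norm_mul, hs, one_mul]
  have hgreedy : bs.IsGreedySet g D := fun n hn m hm => by
    rw [hgD n hn, hcoord]
    split_ifs
    · rw [RCLike.norm_ofReal, abs_of_nonneg (bs.minCoef_nonneg f D)]
      exact bs.minCoef_le hn f
    · rw [norm_mul, hs, one_mul]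
      exact hD n hn m hm
  have hmin : bs.minCoef g D = α := bs.minCoef_congr hgD
  have hproj : bs.proj D g = s • bs.proj D f := by
    simp only [proj, smul_sum, smul_smul]
    exact sum_congr rfl fun n hn => by rw [hcoord, if_neg (hDU' n hn)]
  have h := hv g D U hgreedy hcard (Or.inl hDU)
  rw [hproj, hmin, add_sub_cancel_left, bs.N_smul, hs, one_mul] at h
  rwa [smul_sub, ← add_sub_assoc]

lemma N_ind_le_of_isGreedySet (hp : 0 < p) (hC : 0 < C) (hv : bs.IsSeparatedURGPCCWith C)
    {f : X} {D U : Finset ℕ} (hDU : FinsetBefore D U) (hcard : U.card = D.card)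
    (hU : ∀ n ∈ U, bs.coord n f = 0) (hD : bs.IsGreedySet f D)
    (hD1 : ∀ n ∈ D, 1 ≤ ‖bs.coord n f‖) :
    bs.N (bs.ind U) ≤ 2 ^ (1 / p - 1) * C * bs.N f := by
  rcases D.eq_empty_or_nonempty with rfl | hDne
  · rw [card_empty, card_eq_zero] at hcard
    subst hcard
    rw [show bs.ind ∅ = 0 from sum_empty, bs.N_zero]
    exact mul_nonneg (by positivity) (bs.N_nonneg f)
  have hα : 1 ≤ bs.minCoef f D := bs.one_le_minCoef hDne hD1
  have hadd := N_minCoef_smul_ind_add_smul_le hv hDU hcard hU hD (s := 1) norm_one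
  have hsub := N_minCoef_smul_ind_add_smul_le hv hDU hcard hU hD (s := -1) (by simp)
  rw [one_smul] at hadd
  rw [neg_one_smul, ← sub_eq_add_neg] at hsub
  calc bs.N (bs.ind U) ≤ bs.minCoef f D * bs.N (bs.ind U) :=
        le_mul_of_one_le_left (bs.N_nonneg _) hα
    _ = bs.N (((bs.minCoef f D : ℝ) : 𝕜) • bs.ind U) := by
        rw [bs.N_ofReal_smul, abs_of_nonneg (bs.minCoef_nonneg f D)]
    _ ≤ 2 ^ (1 / p - 1) * (C * bs.N f) := bs.N_le_two_rpow_sub_one_mul hp hadd hsub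
    _ = 2 ^ (1 / p - 1) * C * bs.N f := by ring

lemma N_ind_le_of_card_le (hp : 0 < p) (hC : 0 < C) (hv : bs.IsSeparatedURGPCCWith C)
    (f : X) (A : Finset ℕ) (hA : (A.card : ℕ∞) ≤ {n | 1 ≤ ‖bs.coord n f‖}.encard) :
    bs.N (bs.ind A) ≤ 2 ^ (1 / p - 1) * C ^ 2 * bs.N f := by
  obtain ⟨D, hDcard, hD, hD1⟩ := bs.exists_isGreedySet_one_le_norm_coord f hA
  refine bs.le_mul_N_of_forall_approx hp (by positivity) f fun δ hδ => ?_
  obtain ⟨n, hsmall, hn⟩ := (((bs.tendsto_N_proj_Ico_rpow hp f A.card).eventually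
    (gt_mem_nhds hδ)).and (eventually_gt_atTop ((A ∪ D).sup id))).exists
  set U := Ico n (n + A.card)
  have hUcard : U.card = A.card := by simp [U]
  have hbefore : ∀ B ⊆ A ∪ D, FinsetBefore B U := fun B hB a ha u hu =>
    ((le_sup (f := id) (hB ha)).trans_lt hn).trans_le (mem_Ico.mp hu).1
  have hDU : FinsetBefore D U := hbefore D subset_union_right
  refine ⟨f - bs.proj U f, by rwa [sub_sub_cancel], ?_⟩
  have hUD : bs.N (bs.ind U) ≤ 2 ^ (1 / p - 1) * C * bs.N (f - bs.proj U f) :=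
    N_ind_le_of_isGreedySet hp hC hv hDU (hUcard.trans hDcard.symm)
      (fun m hm => by rw [coord_sub_proj, if_pos hm]) (hD.sub_proj hDU.disjoint)
      fun m hm => by rw [coord_sub_proj, if_neg (disjoint_left.mp hDU.disjoint hm)]; exact hD1 m hm
  calc bs.N (bs.ind A) ≤ C * bs.N (bs.ind U) :=
        N_ind_le_of_finsetBefore hv (hbefore A subset_union_left) hUcard
    _ ≤ C * (2 ^ (1 / p - 1) * C * bs.N (f - bs.proj U f)) := by gcongr
    _ = 2 ^ (1 / p - 1) * C ^ 2 * bs.N (f - bs.proj U f) := by ring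

end SeparatedCondition

section Convexity

def constA (p : ℝ) : ℝ := ((2 : ℝ) ^ p - 1) ^ (-(1 / p))

open scoped Classical in
def constB (𝕜 : Type*) [RCLike 𝕜] (p : ℝ) : ℝ :=
  if (RCLike.I : 𝕜) = 0 then (2 : ℝ) ^ (1 / p) * constA p else (4 : ℝ) ^ (1 / p) * constA p

lemma constA_nonneg (hp : 0 ≤ p) : 0 ≤ constA p :=
  Real.rpow_nonneg (sub_nonneg.mpr (Real.one_le_rpow one_le_two hp)) _

lemma constA_mul_rpow (hp : 0 < p) {M : ℝ} (hM : 0 ≤ M) :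
    (constA p * M) ^ p = M ^ p / (2 ^ p - 1) := by
  have h2p : 0 ≤ (2 : ℝ) ^ p - 1 := sub_nonneg.mpr (Real.one_le_rpow one_le_two hp.le)
  rw [Real.mul_rpow (constA_nonneg hp.le) hM, constA, ← Real.rpow_mul h2p,
    show -(1 / p) * p = -1 by field_simp, Real.rpow_neg_one, inv_mul_eq_div]

lemma exists_two_smul_sum_eq (A : Finset ℕ) {a : ℕ → ℝ}
    (ha : ∀ j ∈ A, a j ∈ Set.Icc (0 : ℝ) 1) :
    ∃ B ⊆ A, ∃ a' : ℕ → ℝ, (∀ j ∈ A, a' j ∈ Set.Icc (0 : ℝ) 1) ∧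
      (2 : 𝕜) • ∑ j ∈ A, (a j : 𝕜) • bs.e j = bs.ind B + ∑ j ∈ A, (a' j : 𝕜) • bs.e j := by
  classical
  refine ⟨A.filter fun j => 1 / 2 < a j, filter_subset _ _,
    fun j => 2 * a j - if 1 / 2 < a j then 1 else 0, fun j hj => ?_, ?_⟩
  · obtain ⟨h0, h1⟩ := ha j hj
    simp only [Set.mem_Icc]
    split_ifs <;> constructor <;> linarith
  · rw [ind, sum_filter, smul_sum, ← sum_add_distrib]
    refine sum_congr rfl fun j _ => ?_
    by_cases h : 1 / 2 < a j <;> simp only [h, if_true, if_false] <;> push_cast <;> module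

/-- The binary expansion of coefficients in `[0, 1]`, run as a fixed-point estimate on the
supremum `s` of `‖∑ a_j x_j‖^p`: halving gives `2^p s ≤ M^p + s`. -/
lemma N_sum_ofReal_smul_le_of_mem_Icc (hp : 0 < p) {A : Finset ℕ} {M : ℝ}
    (hM : ∀ B ⊆ A, bs.N (bs.ind B) ≤ M) {a : ℕ → ℝ} (ha : ∀ j ∈ A, a j ∈ Set.Icc (0 : ℝ) 1) :
    bs.N (∑ j ∈ A, (a j : 𝕜) • bs.e j) ≤ constA p * M := by
  have hM0 : 0 ≤ M := (bs.N_nonneg _).trans (hM ∅ (empty_subset _))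
  set T := (fun a : ℕ → ℝ => bs.N (∑ j ∈ A, (a j : 𝕜) • bs.e j) ^ p) ''
    {a | ∀ j ∈ A, a j ∈ Set.Icc (0 : ℝ) 1}
  have hbdd : BddAbove T := by
    refine ⟨∑ j ∈ A, bs.N (bs.e j) ^ p, ?_⟩
    rintro _ ⟨a, ha, rfl⟩
    refine (bs.N_sum_rpow_le hp _ _).trans (sum_le_sum fun j hj => ?_)
    rw [bs.N_ofReal_smul, Real.mul_rpow (abs_nonneg _) (bs.N_nonneg _)]
    refine mul_le_of_le_one_left (Real.rpow_nonneg (bs.N_nonneg _) _)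
      (Real.rpow_le_one (abs_nonneg _) ?_ hp.le)
    obtain ⟨h0, h1⟩ := ha j hj
    rwa [abs_of_nonneg h0]
  have hstep : ∀ t ∈ T, t ≤ (M ^ p + sSup T) / 2 ^ p := by
    rintro _ ⟨a, ha, rfl⟩
    obtain ⟨B, hB, a', ha', heq⟩ := bs.exists_two_smul_sum_eq A ha
    rw [le_div_iff₀' (by positivity)]
    calc 2 ^ p * bs.N (∑ j ∈ A, (a j : 𝕜) • bs.e j) ^ p
        = bs.N ((2 : 𝕜) • ∑ j ∈ A, (a j : 𝕜) • bs.e j) ^ p := by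
          rw [bs.N_smul, RCLike.norm_two, Real.mul_rpow zero_le_two (bs.N_nonneg _)]
      _ ≤ bs.N (bs.ind B) ^ p + bs.N (∑ j ∈ A, (a' j : 𝕜) • bs.e j) ^ p := by
          rw [heq]; exact bs.N_padd _ _
      _ ≤ M ^ p + sSup T := by
          gcongr
          · exact bs.N_nonneg _
          · exact hM B hB
          · exact le_csSup hbdd ⟨a', ha', rfl⟩
  have hsup : sSup T ≤ M ^ p / (2 ^ p - 1) := by
    have hne : T.Nonempty := ⟨_, a, ha, rfl⟩
    have h := csSup_le hne hstep
    have h2p : 1 < (2 : ℝ) ^ p := Real.one_lt_rpow one_lt_two hp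
    rw [le_div_iff₀ (by positivity)] at h
    rw [le_div_iff₀ (by linarith)]
    linarith
  rw [← Real.rpow_le_rpow_iff (bs.N_nonneg _) (mul_nonneg (constA_nonneg hp.le) hM0) hp,
    constA_mul_rpow hp hM0]
  exact (le_csSup hbdd ⟨a, ha, rfl⟩).trans hsup

lemma N_sum_ofReal_smul_le_of_abs_le (hp : 0 < p) {A : Finset ℕ} {M : ℝ}
    (hM : ∀ B ⊆ A, bs.N (bs.ind B) ≤ M) {a : ℕ → ℝ} (ha : ∀ j ∈ A, |a j| ≤ 1) :
    bs.N (∑ j ∈ A, (a j : 𝕜) • bs.e j) ≤ 2 ^ (1 / p) * (constA p * M) := by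
  have hsplit : ∑ j ∈ A, (a j : 𝕜) • bs.e j =
      ∑ j ∈ A, (((a j)⁺ : ℝ) : 𝕜) • bs.e j + -∑ j ∈ A, (((a j)⁻ : ℝ) : 𝕜) • bs.e j := by
    rw [← sub_eq_add_neg, ← sum_sub_distrib]
    refine sum_congr rfl fun j _ => ?_
    rw [← sub_smul, ← RCLike.ofReal_sub, posPart_sub_negPart]
  rw [hsplit]
  refine bs.N_add_le_two_rpow_mul hp ?_ ?_
  · refine bs.N_sum_ofReal_smul_le_of_mem_Icc hp hM fun j hj => ⟨posPart_nonneg _, ?_⟩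
    exact sup_le (abs_le.mp (ha j hj)).2 zero_le_one
  · rw [bs.N_neg]
    refine bs.N_sum_ofReal_smul_le_of_mem_Icc hp hM fun j hj => ⟨negPart_nonneg _, ?_⟩
    exact sup_le (neg_le.mpr (abs_le.mp (ha j hj)).1) zero_le_one

lemma N_sum_smul_le_of_norm_le (hp : 0 < p) {A : Finset ℕ} {M : ℝ}
    (hM : ∀ B ⊆ A, bs.N (bs.ind B) ≤ M) {a : ℕ → 𝕜} (ha : ∀ j ∈ A, ‖a j‖ ≤ 1) :
    bs.N (∑ j ∈ A, a j • bs.e j) ≤ constB 𝕜 p * M := by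
  have hsplit : ∑ j ∈ A, a j • bs.e j = ∑ j ∈ A, (RCLike.re (a j) : 𝕜) • bs.e j +
      (RCLike.I : 𝕜) • ∑ j ∈ A, (RCLike.im (a j) : 𝕜) • bs.e j := by
    rw [smul_sum, ← sum_add_distrib]
    refine sum_congr rfl fun j _ => ?_
    rw [smul_smul, ← add_smul, mul_comm, RCLike.re_add_im]
  have hre := bs.N_sum_ofReal_smul_le_of_abs_le hp hM
    fun j hj => (RCLike.abs_re_le_norm (a j)).trans (ha j hj)
  have him := bs.N_sum_ofReal_smul_le_of_abs_le hp hM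
    fun j hj => (RCLike.abs_im_le_norm (a j)).trans (ha j hj)
  rw [hsplit, constB]
  split_ifs with hI
  · rw [hI, zero_smul, add_zero, mul_assoc]
    exact hre
  · rw [show (4 : ℝ) ^ (1 / p) = 2 ^ (1 / p) * 2 ^ (1 / p) by
      rw [← Real.mul_rpow zero_le_two zero_le_two]; norm_num, mul_assoc, mul_assoc]
    refine bs.N_add_le_two_rpow_mul hp hre ?_
    rwa [bs.N_smul, RCLike.norm_I_of_ne_zero hI, one_mul]

end Convexity

lemma card_le_encard_setOf_one_le_norm_coord_indSign {η : ℕ → 𝕜} {B : Finset ℕ}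
    (hη : IsSign η B) : (B.card : ℕ∞) ≤ {n | 1 ≤ ‖bs.coord n (bs.indSign η B)‖}.encard := by
  rw [← Set.encard_coe_eq_coe_finsetCard]
  exact Set.encard_mono fun n hn => by simp [coord_indSign, mem_coe.mp hn, hη n hn]

lemma N_indSign_le_of_card_le (hp : 0 < p) {C : ℝ} (hC : 0 < C)
    (hv : bs.IsSeparatedURGPCCWith C) {ε : ℕ → 𝕜} {A : Finset ℕ} (hε : IsSign ε A) (f : X)
    (hA : (A.card : ℕ∞) ≤ {n | 1 ≤ ‖bs.coord n f‖}.encard) :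
    bs.N (bs.indSign ε A) ≤ 2 ^ (1 / p - 1) * constB 𝕜 p * C ^ 2 * bs.N f := by
  have hM : ∀ B ⊆ A, bs.N (bs.ind B) ≤ 2 ^ (1 / p - 1) * C ^ 2 * bs.N f := fun B hB =>
    N_ind_le_of_card_le hp hC hv f B ((Nat.cast_le.mpr (card_le_card hB)).trans hA)
  calc bs.N (bs.indSign ε A) ≤ constB 𝕜 p * (2 ^ (1 / p - 1) * C ^ 2 * bs.N f) :=
        bs.N_sum_smul_le_of_norm_le hp hM fun j hj => (hε j hj).le
    _ = 2 ^ (1 / p - 1) * constB 𝕜 p * C ^ 2 * bs.N f := by ring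

end PBasis

open scoped Classical in
theorem end2_implies_superdemocratic_general {𝕜 : Type*} [RCLike 𝕜] {X : Type*} [AddCommGroup X]
    [Module 𝕜 X] {p : ℝ} (hp : 0 < p) (bs : PBasis 𝕜 X p) (C : ℝ) (hC : 0 < C)
    (h : ∀ (f : X) (A B : Finset ℕ), bs.IsGreedySet f A → B.card = A.card →
      (PBasis.FinsetBefore A B ∨ PBasis.FinsetBefore B A) →
      bs.N (f - bs.proj A f) ≤ C * bs.N (f - ((bs.minCoef f A : ℝ) : 𝕜) • bs.ind B)) :
    (∀ (A : Finset ℕ) (ε : ℕ → 𝕜) (f : X), A.Nonempty → PBasis.IsSign ε A →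
      (A.card : ℕ∞) ≤ {n : ℕ | 1 ≤ ‖bs.coord n f‖}.encard →
      bs.N (bs.indSign ε A) ≤
        (2 : ℝ) ^ (1 / p - 1) *
          (if (RCLike.I : 𝕜) = 0 then (2 : ℝ) ^ (1 / p) * ((2 : ℝ) ^ p - 1) ^ (-(1 / p))
            else (4 : ℝ) ^ (1 / p) * ((2 : ℝ) ^ p - 1) ^ (-(1 / p))) * C ^ 2 * bs.N f) ∧
      bs.IsSuperdemocraticWith
        ((2 : ℝ) ^ (1 / p - 1) *
          (if (RCLike.I : 𝕜) = 0 then (2 : ℝ) ^ (1 / p) * ((2 : ℝ) ^ p - 1) ^ (-(1 / p))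
            else (4 : ℝ) ^ (1 / p) * ((2 : ℝ) ^ p - 1) ^ (-(1 / p))) * C ^ 2) := by
  refine ⟨fun A ε f _ hε => bs.N_indSign_le_of_card_le hp hC h hε f,
    fun A B ε η hAB hε hη => bs.N_indSign_le_of_card_le hp hC h hε _ ?_⟩
  exact (Nat.cast_le.mpr hAB).trans (bs.card_le_encard_setOf_one_le_norm_coord_indSign hη)

open scoped Classical in
/-- If the basis satisfies the condition (v) of Theorem 1.7 with constant `C`,
then `‖𝟙_{ε,A}‖ ≤ 2^{1/p−1} B_p C² ‖f‖` whenever `f` has at least `|A|` coefficients of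
modulus `≥ 1`; in particular the basis is superdemocratic with constant
`≤ 2^{1/p−1} B_p C²`, where `B_p = 2^{1/p}A_p` if `𝕜 = ℝ` and `B_p = 4^{1/p}A_p` if `𝕜 = ℂ`,
and `A_p = (2^p − 1)^{−1/p}`. -/
theorem end2_implies_superdemocratic {𝕜 : Type*} [RCLike 𝕜] {X : Type*} [AddCommGroup X]
    [Module 𝕜 X] {p : ℝ} (hp : 0 < p) (hp1 : p ≤ 1) (bs : PBasis 𝕜 X p) (C : ℝ) (hC : 0 < C)
    (h : ∀ (f : X) (A B : Finset ℕ), bs.IsGreedySet f A → B.card = A.card →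
      (PBasis.FinsetBefore A B ∨ PBasis.FinsetBefore B A) →
      bs.N (f - bs.proj A f) ≤ C * bs.N (f - ((bs.minCoef f A : ℝ) : 𝕜) • bs.ind B)) :
    (∀ (A : Finset ℕ) (ε : ℕ → 𝕜) (f : X), A.Nonempty → PBasis.IsSign ε A →
      (A.card : ℕ∞) ≤ {n : ℕ | 1 ≤ ‖bs.coord n f‖}.encard →
      bs.N (bs.indSign ε A) ≤
        (2 : ℝ) ^ (1 / p - 1) *
          (if (RCLike.I : 𝕜) = 0 then (2 : ℝ) ^ (1 / p) * ((2 : ℝ) ^ p - 1) ^ (-(1 / p))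
            else (4 : ℝ) ^ (1 / p) * ((2 : ℝ) ^ p - 1) ^ (-(1 / p))) * C ^ 2 * bs.N f) ∧
      bs.IsSuperdemocraticWith
        ((2 : ℝ) ^ (1 / p - 1) *
          (if (RCLike.I : 𝕜) = 0 then (2 : ℝ) ^ (1 / p) * ((2 : ℝ) ^ p - 1) ^ (-(1 / p))
            else (4 : ℝ) ^ (1 / p) * ((2 : ℝ) ^ p - 1) ^ (-(1 / p))) * C ^ 2) :=
  end2_implies_superdemocratic_general hp bs C hC h
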